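/- For any coprime integers a and b with b ≥ 1, one has max_{0 ≤ N < b} P_N(a/b) ≥ b. -/

import Mathlib

/-!
With `ζ = e^{2πia/b}` one has `|2 sin(πna/b)| = |ζ^n - 1|`, so `P_{b-1}(a/b) = ∏_{n=1}^{b-1} |ζ^n - 1|`.
When `a` is coprime to `b`, `ζ` is a primitive `b`-th root of unity, and evaluating
`(X^b - 1)/(X - 1) = ∏_{n=1}^{b-1} (X - ζ^n)` at `X = 1` shows that this product is exactly `b`.
-/

/-- The Sudler product `P_N(α) = ∏_{n=1}^N |2 sin(π n α)|`. -/
noncomputable def sudler (N : ℕ) (α : ℝ) : ℝ :=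
  ∏ n ∈ Finset.Icc 1 N, |2 * Real.sin (Real.pi * n * α)|

open Complex Finset
open scoped Real

lemma sudler_eq_prod_norm_pow_sub_one (N : ℕ) (α : ℝ) :
    sudler N α = ∏ n ∈ Icc 1 N, ‖exp (2 * π * I * α) ^ n - 1‖ := by
  refine prod_congr rfl fun n _ => ?_
  rw [← exp_nat_mul, show (n : ℂ) * (2 * π * I * α) = I * ((2 * π * n * α : ℝ) : ℂ) by
    push_cast; ring, norm_exp_I_mul_ofReal_sub_one, Real.norm_eq_abs]
  congr 3
  ring

lemma isPrimitiveRoot_exp_int_div {a : ℤ} {n : ℕ} (hn : n ≠ 0) (ha : IsCoprime a n) :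
    IsPrimitiveRoot (exp (2 * π * I * (a / n))) n := by
  have h := (isPrimitiveRoot_exp n hn).zpow_of_gcd_eq_one a (Int.isCoprime_iff_gcd_eq_one.mp ha)
  rwa [← exp_int_mul, show (a : ℂ) * (2 * π * I / n) = 2 * π * I * (a / n) by ring] at h

lemma IsPrimitiveRoot.prod_norm_pow_sub_one {ζ : ℂ} {n : ℕ} (hζ : IsPrimitiveRoot ζ (n + 1)) :
    ∏ k ∈ Icc 1 n, ‖ζ ^ k - 1‖ = n + 1 := by
  have h := congrArg norm hζ.prod_one_sub_pow_eq_order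
  rw [norm_prod, ← Nat.cast_succ, norm_natCast, Nat.cast_succ] at h
  rw [← h, ← Ico_add_one_right_eq_Icc, prod_Ico_eq_prod_range, Nat.add_sub_cancel]
  refine prod_congr rfl fun k _ => ?_
  rw [← norm_neg, neg_sub, add_comm]

theorem sudler_pred_int_div_eq {a : ℤ} {n : ℕ} (hn : n ≠ 0) (ha : IsCoprime a n) :
    sudler (n - 1) (a / n) = n := by
  obtain ⟨m, rfl⟩ := Nat.exists_eq_add_one_of_ne_zero hn
  have hζ := isPrimitiveRoot_exp_int_div hn ha
  rw [sudler_eq_prod_norm_pow_sub_one, Nat.add_sub_cancel]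
  push_cast at hζ ⊢
  exact hζ.prod_norm_pow_sub_one

/-- `max_{0 ≤ N < b} P_N(a/b) ≥ b`. -/
theorem sudler_max_ge (a b : ℤ) (hb : 1 ≤ b) (hab : IsCoprime a b)
    (hne : (Finset.range b.toNat).Nonempty) :
    (b : ℝ) ≤ (Finset.range b.toNat).sup' hne (fun N => sudler N ((a : ℝ) / b)) := by
  obtain ⟨n, rfl⟩ := Int.eq_ofNat_of_zero_le (by omega : 0 ≤ b)
  have hn : n ≠ 0 := by omega
  calc ((n : ℤ) : ℝ) = sudler (n - 1) (a / n) := by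
        rw [sudler_pred_int_div_eq hn hab, Int.cast_natCast]
    _ ≤ _ := by
      refine le_sup'_of_le _ (b := n - 1) (by simpa using Nat.sub_one_lt hn) ?_
      simp
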